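/- arXiv:1405.7122 — 2 statements merged into one kernel-verified Lean document; each statement's English description precedes it below -/
import Mathlib

section
/- The alternating sum A_m = Σ_{s ∈ S_m} sgn(s) · u_{s(1)} ⋯ u_{s(m)} in the free associative algebra on generators u_1,…,u_m is a Lie element (i.e., lies in the Lie subalgebra generated by u_1,…,u_m under the commutator bracket) if and only if m = 1 or m = 2. -/
/-!
Send `u_i` to the basis vector `e_i` of the exterior algebra of `k^m`. There `A_m` becomes
`m! • e_1 ∧ ⋯ ∧ e_m`, while the elements of degree `1` and `2` form a Lie subalgebra (degree-2
elements are central, and the commutator of two degree-1 elements has degree 2), which therefore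
contains the image of every Lie element. For `m ∉ {1, 2}` the coefficient of `e_1 ∧ ⋯ ∧ e_m`
vanishes on that subalgebra but not on `m! • e_1 ∧ ⋯ ∧ e_m`, since `k` has characteristic zero.
-/

attribute [local instance 100] LieRing.ofAssociativeRing

open Equiv ExteriorAlgebra Nat

section StandardPolynomial

variable {A : Type*} [Ring A]

def standardPolynomial {n : ℕ} (v : Fin n → A) : A :=
  ∑ s : Perm (Fin n), (Perm.sign s : ℤ) • (List.ofFn fun i => v (s i)).prod

theorem map_standardPolynomial {B F : Type*} [Ring B] [FunLike F A B] [RingHomClass F A B]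
    (f : F) {n : ℕ} (v : Fin n → A) :
    f (standardPolynomial v) = standardPolynomial (f ∘ v) := by
  simp only [standardPolynomial, map_sum, map_zsmul, map_list_prod, List.map_ofFn]
  rfl

theorem standardPolynomial_fin_one (v : Fin 1 → A) : standardPolynomial v = v 0 := by
  simp [standardPolynomial]

theorem standardPolynomial_fin_two (v : Fin 2 → A) : standardPolynomial v = ⁅v 0, v 1⁆ := by
  have huniv : (Finset.univ : Finset (Perm (Fin 2))) = {1, swap 0 1} := by decide
  rw [standardPolynomial, huniv, Finset.sum_pair (by decide), Ring.lie_def]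
  simp [List.ofFn_succ, sub_eq_add_neg]

end StandardPolynomial

namespace ExteriorAlgebra

variable {R M : Type*} [CommRing R] [AddCommGroup M] [Module R M]

theorem ι_mul_ι_swap (x y : M) : ι R y * ι R x = -(ι R x * ι R y) :=
  eq_neg_of_add_eq_zero_left (by rw [add_comm]; exact ι_add_mul_swap x y)

theorem commute_ι_of_mem_exteriorPower_two {z : ExteriorAlgebra R M} (hz : z ∈ ⋀[R]^2 M)
    (x : M) : Commute (ι R x) z := by
  rw [exteriorPower, pow_two] at hz
  induction hz using Submodule.mul_induction_on' with
  | mem_mul_mem a ha b hb =>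
    obtain ⟨a, rfl⟩ := ha
    obtain ⟨b, rfl⟩ := hb
    change ι R x * (ι R a * ι R b) = ι R a * ι R b * ι R x
    rw [← mul_assoc, ι_mul_ι_swap a x, neg_mul, mul_assoc, ι_mul_ι_swap b x, mul_neg, neg_neg,
      ← mul_assoc]
  | add z w _ _ hz hw => exact hz.add_right hw

theorem commute_of_mem_exteriorPower_two {z : ExteriorAlgebra R M} (hz : z ∈ ⋀[R]^2 M)
    (x : ExteriorAlgebra R M) : Commute x z := by
  induction x using ExteriorAlgebra.induction with
  | algebraMap r => exact Algebra.commutes r z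
  | ι x => exact commute_ι_of_mem_exteriorPower_two hz x
  | mul x y hx hy => exact hx.mul_left hy
  | add x y hx hy => exact hx.add_left hy

variable (R M) in
def degreeOneTwoLieSubalgebra : LieSubalgebra R (ExteriorAlgebra R M) where
  toSubmodule := ⋀[R]^1 M ⊔ ⋀[R]^2 M
  lie_mem' {x y} hx hy := by
    obtain ⟨a, ha, z, hz, rfl⟩ := Submodule.mem_sup.mp hx
    obtain ⟨b, hb, w, hw, rfl⟩ := Submodule.mem_sup.mp hy
    have hab : ⁅a, b⁆ ∈ ⋀[R]^2 M := by
      have hmul : ⋀[R]^1 M * ⋀[R]^1 M = ⋀[R]^2 M := (pow_add _ 1 1).symm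
      rw [Ring.lie_def, ← hmul]
      exact sub_mem (Submodule.mul_mem_mul ha hb) (Submodule.mul_mem_mul hb ha)
    rw [lie_add, (commute_of_mem_exteriorPower_two hw _).lie_eq, add_zero, add_lie,
      (commute_of_mem_exteriorPower_two hz b).symm.lie_eq, add_zero]
    exact Submodule.mem_sup_right hab

theorem liftAlternating_eq_zero_of_mem_exteriorPower {N : Type*} [AddCommGroup N] [Module R N]
    {f : ∀ i, M [⋀^Fin i]→ₗ[R] N} {n : ℕ} (hf : f n = 0) {x : ExteriorAlgebra R M}
    (hx : x ∈ ⋀[R]^n M) : liftAlternating f x = 0 := by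
  rw [← ιMulti_span_fixedDegree] at hx
  induction hx using Submodule.span_induction with
  | mem x hx =>
    obtain ⟨v, rfl⟩ := hx
    rw [liftAlternating_apply_ιMulti, hf, AlternatingMap.zero_apply]
  | zero => exact map_zero _
  | add x y _ _ hx hy => rw [map_add, hx, hy, add_zero]
  | smul r x _ hx => rw [map_smul, hx, smul_zero]

theorem standardPolynomial_ι (n : ℕ) (v : Fin n → M) :
    standardPolynomial (ι R ∘ v) = n ! • ιMulti R n v := by
  have hperm (s : Perm (Fin n)) :
      (Perm.sign s : ℤ) • (List.ofFn fun i => ι R (v (s i))).prod = ιMulti R n v := by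
    rw [← ιMulti_apply, ← Function.comp_def v, AlternatingMap.map_perm, Units.smul_def, smul_smul,
      ← Units.val_mul, Int.units_mul_self, Units.val_one, one_smul]
  simp only [standardPolynomial, Function.comp_apply, hperm, Finset.sum_const, Finset.card_univ,
    Fintype.card_perm, Fintype.card_fin]

end ExteriorAlgebra

section TopCoefficient

variable {R : Type*} [CommRing R]

-- The coefficient of `e_1 ∧ ⋯ ∧ e_n`: the determinant in degree `n` and zero in all other degrees.
variable (R) in
noncomputable def topCoeff (n : ℕ) : ExteriorAlgebra R (Fin n → R) →ₗ[R] R :=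
  liftAlternating (Pi.single (M := fun i => (Fin n → R) [⋀^Fin i]→ₗ[R] R) n
    Matrix.detRowAlternating)

theorem topCoeff_ιMulti_single (n : ℕ) :
    topCoeff R n (ιMulti R n fun i => Pi.single i 1) = 1 := by
  rw [topCoeff, liftAlternating_apply_ιMulti, Pi.single_eq_same]
  have hone : Matrix.of (fun i : Fin n => (Pi.single i 1 : Fin n → R)) = 1 := by
    ext i j
    exact Matrix.one_eq_pi_single.symm
  exact (congrArg Matrix.det hone).trans Matrix.det_one

theorem topCoeff_eq_zero_of_mem_exteriorPower {n i : ℕ} (h : i ≠ n)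
    {x : ExteriorAlgebra R (Fin n → R)} (hx : x ∈ ⋀[R]^i (Fin n → R)) : topCoeff R n x = 0 :=
  liftAlternating_eq_zero_of_mem_exteriorPower (Pi.single_eq_of_ne h _) hx

theorem topCoeff_eq_zero_of_mem_degreeOneTwoLieSubalgebra {n : ℕ} (h1 : n ≠ 1) (h2 : n ≠ 2)
    {x : ExteriorAlgebra R (Fin n → R)} (hx : x ∈ degreeOneTwoLieSubalgebra R (Fin n → R)) :
    topCoeff R n x = 0 := by
  obtain ⟨y, hy, z, hz, rfl⟩ := Submodule.mem_sup.mp hx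
  rw [map_add, topCoeff_eq_zero_of_mem_exteriorPower h1.symm hy,
    topCoeff_eq_zero_of_mem_exteriorPower h2.symm hz, add_zero]

end TopCoefficient

theorem standardPolynomial_freeAlgebra_ι_notMem_lieSpan {R : Type*} [CommRing R] [CharZero R]
    {n : ℕ} (h1 : n ≠ 1) (h2 : n ≠ 2) :
    standardPolynomial (FreeAlgebra.ι R) ∉
      LieSubalgebra.lieSpan R (FreeAlgebra R (Fin n)) (Set.range (FreeAlgebra.ι R)) := by
  intro hmem
  let f : FreeAlgebra R (Fin n) →ₐ[R] ExteriorAlgebra R (Fin n → R) :=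
    FreeAlgebra.lift R fun i => ι R (Pi.single i 1)
  have hspan : LieSubalgebra.lieSpan R _ (Set.range (FreeAlgebra.ι R)) ≤
      (degreeOneTwoLieSubalgebra R (Fin n → R)).comap f.toLieHom := by
    rw [LieSubalgebra.lieSpan_le]
    rintro _ ⟨i, rfl⟩
    change f (FreeAlgebra.ι R i) ∈ ⋀[R]^1 (Fin n → R) ⊔ ⋀[R]^2 (Fin n → R)
    rw [FreeAlgebra.lift_ι_apply]
    refine Submodule.mem_sup_left ?_
    rw [exteriorPower, pow_one]
    exact LinearMap.mem_range_self _ _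
  have himage :
      f (standardPolynomial (FreeAlgebra.ι R)) = n ! • ιMulti R n fun i => Pi.single i 1 := by
    rw [map_standardPolynomial, ← standardPolynomial_ι]
    congr 1
    ext i
    simp [f]
  have hzero : topCoeff R n (f (standardPolynomial (FreeAlgebra.ι R))) = 0 :=
    topCoeff_eq_zero_of_mem_degreeOneTwoLieSubalgebra h1 h2 (hspan hmem)
  rw [himage, map_nsmul, topCoeff_ιMulti_single, nsmul_one] at hzero
  exact n.factorial_ne_zero (by exact_mod_cast hzero)

theorem alternating_sum_is_lie_iff_general (k : Type) [Field k] [CharZero k]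
    (m : ℕ) :
    (∑ s : Equiv.Perm (Fin m),
        ((Equiv.Perm.sign s : ℤ) •
          (List.ofFn fun i : Fin m => FreeAlgebra.ι k (s i)).prod))
      ∈ LieSubalgebra.lieSpan k (FreeAlgebra k (Fin m))
          (Set.range (FreeAlgebra.ι k)) ↔ m = 1 ∨ m = 2 := by
  change standardPolynomial (FreeAlgebra.ι k) ∈ _ ↔ _
  constructor
  · contrapose!
    exact fun h => standardPolynomial_freeAlgebra_ι_notMem_lieSpan h.1 h.2
  · rintro (rfl | rfl)
    · rw [standardPolynomial_fin_one]
      exact LieSubalgebra.subset_lieSpan ⟨0, rfl⟩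
    · rw [standardPolynomial_fin_two]
      exact LieSubalgebra.lie_mem _ (LieSubalgebra.subset_lieSpan ⟨0, rfl⟩)
        (LieSubalgebra.subset_lieSpan ⟨1, rfl⟩)

/-- The alternating sum `A_m = Σ_{s ∈ S_m} sgn(s) u_{s(1)} ⋯ u_{s(m)}` in the free
associative algebra on `m` generators lies in the Lie subalgebra generated by the
generators (under the commutator bracket) if and only if `m = 1` or `m = 2`. -/
theorem alternating_sum_is_lie_iff (k : Type) [Field k] [CharZero k]
    (m : ℕ) (hm : 1 ≤ m) :
    (∑ s : Equiv.Perm (Fin m),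
        ((Equiv.Perm.sign s : ℤ) •
          (List.ofFn fun i : Fin m => FreeAlgebra.ι k (s i)).prod))
      ∈ LieSubalgebra.lieSpan k (FreeAlgebra k (Fin m))
          (Set.range (FreeAlgebra.ι k)) ↔ m = 1 ∨ m = 2 :=
  alternating_sum_is_lie_iff_general k m
end

section
/- Let V be the space of multilinear elements of degree n in the free anti-commutative algebra AC(x_1,…,x_n), and consider w = {x_1,{x_2,…,{x_{n−1},x_n}…}}. For each i, define the x_i-flip F_i on words in normal form {u_1,{u_2,…,{u_k,x_i}…}} (u_j not containing x_i) by F_i : (ad u_1 ⋯ ad u_k)(x_i) ↦ −(−1)^k (ad u_k ⋯ ad u_1)(x_i). Then the group generated by the flips F_1,…,F_n acting on the orbit of w contains, for every permutation σ ∈ S_n, the signed word sgn(σ)·{x_{σ(1)},{x_{σ(2)},…,{x_{σ(n−1)},x_{σ(n)}}…}}. -/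
/-- The left-normed word `{x_{σ(1)},{x_{σ(2)},…,{x_{σ(n−1)},x_{σ(n)}}…}}` in an
algebra with one bilinear operation (written multiplicatively), for a permutation
`σ` of the `n = m + 1` generators. -/
def leftNormed {B : Type} [NonUnitalNonAssocRing B] {m : ℕ}
    (x : Fin (m + 1) → B) (σ : Equiv.Perm (Fin (m + 1))) : B :=
  (List.ofFn fun i : Fin m => x (σ i.castSucc)).foldr (· * ·) (x (σ (Fin.last m)))

/-!
Write `comb l a` for the normal word `(ad x_{l₁} ⋯ ad x_{lₖ})(x_a)`. A flip `F_i` cuts a word at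
an interior occurrence of `x_i`: `F_i (comb (l₁ ++ i :: l₂) a) = ± comb l₂ a * comb l₁.reverse i`.
Hence on the word of a permutation `F_i F_k F_i` exchanges two adjacent letters `i, k` (cut at
`x_i`, move `x_k` across the product, glue back), and `F_i F_i` exchanges the last two letters,
both times changing the sign. Adjacent transpositions generate `S_n` and each one changes the
sign of a permutation, so induction along a product of them reaches `sgn σ • w_σ` for every `σ`.
-/

open Equiv

namespace List

variable {α : Type*} {m : ℕ}

theorem ofFn_eq_take_append_cons_cons (f : Fin (m + 1) → α) (i : Fin m) :
    ofFn f = (ofFn f).take i ++ f i.castSucc :: f i.succ :: (ofFn f).drop (i + 2) := by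
  conv_lhs => rw [← take_append_drop i (ofFn f), drop_eq_getElem_cons (by simp),
    drop_eq_getElem_cons (by simp)]
  simp only [List.getElem_ofFn]
  rfl

theorem ofFn_comp_swap_castSucc_succ (f : Fin (m + 1) → α) (i : Fin m) :
    ofFn (f ∘ Equiv.swap i.castSucc i.succ) =
      (ofFn f).take i ++ f i.succ :: f i.castSucc :: (ofFn f).drop (i + 2) := by
  have hfix : ∀ j : Fin (m + 1), (j : ℕ) ≠ i → (j : ℕ) ≠ i + 1 →
      (f ∘ Equiv.swap i.castSucc i.succ) j = f j := fun j h₁ h₂ => by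
    rw [Function.comp_apply, Equiv.swap_apply_of_ne_of_ne (by simpa [Fin.ext_iff] using h₁)
      (by simpa [Fin.ext_iff] using h₂)]
  have htake : (ofFn (f ∘ Equiv.swap i.castSucc i.succ)).take i = (ofFn f).take i :=
    ext_getElem (by simp) fun j h _ => by
      simp only [length_take, length_ofFn] at h
      simp only [getElem_take, List.getElem_ofFn]
      exact hfix _ (by simp; omega) (by simp; omega)
  have hdrop : (ofFn (f ∘ Equiv.swap i.castSucc i.succ)).drop (i + 2) = (ofFn f).drop (i + 2) :=
    ext_getElem (by simp) fun j _ _ => by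
      simp only [getElem_drop, List.getElem_ofFn]
      exact hfix _ (by simp; omega) (by simp; omega)
  rw [ofFn_eq_take_append_cons_cons _ i, htake, hdrop, Function.comp_apply, Function.comp_apply,
    Equiv.swap_apply_left, Equiv.swap_apply_right]

end List

theorem Equiv.Perm.mul_swap_castSucc_succ_induction {m : ℕ} {P : Perm (Fin (m + 1)) → Prop}
    (one : P 1) (mul_swap : ∀ ρ (i : Fin m), P ρ → P (ρ * swap i.castSucc i.succ))
    (σ : Perm (Fin (m + 1))) : P σ := by
  suffices h : ∀ ρ, P ρ → P (ρ * σ) by simpa using h 1 one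
  have hσ : σ ∈ Submonoid.closure (Set.range fun i : Fin m => swap i.castSucc i.succ) := by
    rw [Perm.mclosure_swap_castSucc_succ]
    exact Submonoid.mem_top σ
  induction hσ using Submonoid.closure_induction with
  | mem τ hτ =>
    obtain ⟨i, rfl⟩ := hτ
    exact fun ρ => mul_swap ρ i
  | one => simp
  | mul τ τ' _ _ ih ih' => exact fun ρ hρ => mul_assoc ρ τ τ' ▸ ih' _ (ih ρ hρ)

namespace AntiComm

section Combs

variable {B : Type*} [NonUnitalNonAssocRing B] {n : ℕ}

def comb (x : Fin n → B) (l : List (Fin n)) (a : Fin n) : B :=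
  (l.map x).foldr (· * ·) (x a)

def word (x : Fin n → B) : List (Fin n) → B
  | [] => 0
  | [a] => x a
  | a :: b :: l => x a * word x (b :: l)

variable (x : Fin n → B)

@[simp] theorem comb_cons (i : Fin n) (l : List (Fin n)) (a : Fin n) :
    comb x (i :: l) a = x i * comb x l a := rfl

theorem comb_append (l₁ l₂ : List (Fin n)) (a : Fin n) :
    comb x (l₁ ++ l₂) a = (l₁.map x).foldr (· * ·) (comb x l₂ a) := by
  simp [comb, List.foldr_append]

theorem word_append_singleton (l : List (Fin n)) (a : Fin n) :
    word x (l ++ [a]) = comb x l a := by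
  induction l with
  | nil => rfl
  | cons b t ih => cases t <;> simp_all [word]

theorem foldr_mul_neg (l : List B) (b : B) :
    l.foldr (· * ·) (-b) = -l.foldr (· * ·) b := by
  induction l with
  | nil => rfl
  | cons u t ih => simp [ih, mul_neg]

theorem comb_mem_closure {i a : Fin n} {l : List (Fin n)} (h : i ∉ a :: l) :
    comb x l a ∈ Subsemigroup.closure (x '' {j | j ≠ i}) := by
  induction l with
  | nil => exact Subsemigroup.subset_closure ⟨a, fun hai => h (hai ▸ List.mem_cons_self), rfl⟩
  | cons b t ih =>
    simp only [List.mem_cons, not_or] at h ih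
    exact mul_mem (Subsemigroup.subset_closure ⟨b, Ne.symm h.2.1, rfl⟩) (ih ⟨h.1, h.2.2⟩)

theorem map_mem_closure {i : Fin n} {l : List (Fin n)} (h : i ∉ l) :
    ∀ u ∈ l.map x, u ∈ Subsemigroup.closure (x '' {j | j ≠ i}) := by
  simp only [List.mem_map, forall_exists_index, and_imp, forall_apply_eq_imp_iff₂]
  exact fun j hj => Subsemigroup.subset_closure ⟨j, fun hji => h (hji ▸ hj), rfl⟩

end Combs

section Flips

variable {B : Type*} [NonUnitalNonAssocRing B] {n : ℕ}

def IsFlip (x : Fin n → B) (i : Fin n) (f : B → B) : Prop :=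
  ∀ l : List B, (∀ u ∈ l, u ∈ Subsemigroup.closure (x '' {j | j ≠ i})) →
    f (l.foldr (· * ·) (x i)) = ((-1 : ℤ) ^ (l.length + 1)) • l.reverse.foldr (· * ·) (x i)

theorem map_zsmul_of_map_neg {f : B → B} (hneg : ∀ b, f (-b) = -f b) {u : ℤ}
    (hu : u = 1 ∨ u = -1) (b : B) : f (u • b) = u • f b := by
  rcases hu with rfl | rfl <;> simp [hneg]

variable {x : Fin n → B} {i : Fin n} {f : B → B}

theorem IsFlip.apply_comb (hf : IsFlip x i f) {l : List (Fin n)} (h : i ∉ l) :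
    f (comb x l i) = ((-1 : ℤ) ^ (l.length + 1)) • comb x l.reverse i := by
  simpa [comb, List.map_reverse] using hf _ (map_mem_closure x h)

theorem IsFlip.apply_comb_append_cons (hf : IsFlip x i f) (hanti : ∀ a b : B, a * b = -(b * a))
    (hneg : ∀ b, f (-b) = -f b) {a : Fin n} {l₁ l₂ : List (Fin n)} (h₁ : i ∉ l₁)
    (h₂ : i ∉ a :: l₂) :
    f (comb x (l₁ ++ i :: l₂) a) =
      ((-1 : ℤ) ^ (l₁.length + 1)) • (comb x l₂ a * comb x l₁.reverse i) := by
  have hword : comb x (l₁ ++ i :: l₂) a = -((l₁.map x ++ [comb x l₂ a]).foldr (· * ·) (x i)) := by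
    rw [comb_append, comb_cons, hanti, foldr_mul_neg, List.foldr_append]
    rfl
  have hmem : ∀ u ∈ l₁.map x ++ [comb x l₂ a], u ∈ Subsemigroup.closure (x '' {j | j ≠ i}) :=
    List.forall_mem_append.2 ⟨map_mem_closure x h₁, by simpa using comb_mem_closure x h₂⟩
  rw [hword, hneg, hf _ hmem]
  simp [comb, List.map_reverse, pow_succ]

theorem IsFlip.apply_cons_comb_mul (hf : IsFlip x i f) (hanti : ∀ a b : B, a * b = -(b * a))
    {a b : Fin n} {p q : List (Fin n)} (hp : i ∉ a :: p) (hq : i ∉ b :: q) :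
    f (comb x (i :: p) a * comb x q b) = comb x p a * comb x (i :: q) b := by
  have hword : comb x (i :: p) a * comb x q b = [comb x q b, comb x p a].foldr (· * ·) (x i) := by
    rw [comb_cons, hanti (x i), neg_mul, hanti _ (comb x q b), neg_neg]
    rfl
  have hmem : ∀ u ∈ [comb x q b, comb x p a], u ∈ Subsemigroup.closure (x '' {j | j ≠ i}) := by
    simp [comb_mem_closure x hp, comb_mem_closure x hq]
  rw [hword, hf _ hmem, comb_cons, hanti (x i)]
  simp [mul_neg]

theorem IsFlip.apply_mul_comb (hf : IsFlip x i f) (hanti : ∀ a b : B, a * b = -(b * a))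
    {a : Fin n} {p q : List (Fin n)} (hp : i ∉ a :: p) (hq : i ∉ q) :
    f (comb x p a * comb x q i) = ((-1 : ℤ) ^ (q.length + 1)) • comb x (q.reverse ++ i :: p) a := by
  have hmem : ∀ u ∈ comb x p a :: q.map x, u ∈ Subsemigroup.closure (x '' {j | j ≠ i}) := by
    simpa [comb_mem_closure x hp] using map_mem_closure x hq
  have hrev : (comb x p a :: q.map x).reverse.foldr (· * ·) (x i) =
      -comb x (q.reverse ++ i :: p) a := by
    rw [List.reverse_cons, List.foldr_append, comb_append, comb_cons, ← List.map_reverse,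
      ← foldr_mul_neg, ← hanti]
    rfl
  rw [show comb x p a * comb x q i = (comb x p a :: q.map x).foldr (· * ·) (x i) from rfl,
    hf _ hmem, hrev]
  simp [pow_succ]

variable {F : Fin n → B → B}

theorem apply_flips_comb_swap (hanti : ∀ a b : B, a * b = -(b * a))
    (hneg : ∀ j b, F j (-b) = -F j b) (hF : ∀ j, IsFlip x j (F j)) {a i k : Fin n}
    {l₁ l₂ : List (Fin n)} (h : (a :: l₁ ++ i :: k :: l₂).Nodup) :
    F i (F k (F i (comb x (l₁ ++ i :: k :: l₂) a))) = -comb x (l₁ ++ k :: i :: l₂) a := by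
  simp only [List.cons_append, List.nodup_cons, List.nodup_append, List.mem_append, List.mem_cons,
    not_or] at h
  obtain ⟨⟨-, hai, hak, -⟩, -, ⟨⟨hik, hi₂⟩, hk₂, -⟩, h₁⟩ := h
  have hi₁ : i ∉ l₁ := fun hi => h₁ i hi i (.inl rfl) rfl
  have hk₁ : k ∉ l₁ := fun hk => h₁ k hk k (.inr (.inl rfl)) rfl
  rw [(hF i).apply_comb_append_cons hanti (hneg i) hi₁ (by simp [Ne.symm hai, hik, hi₂]),
    map_zsmul_of_map_neg (hneg k) (neg_one_pow_eq_or ℤ _),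
    (hF k).apply_cons_comb_mul hanti (by simp [Ne.symm hak, hk₂]) (by simp [Ne.symm hik, hk₁]),
    map_zsmul_of_map_neg (hneg i) (neg_one_pow_eq_or ℤ _),
    (hF i).apply_mul_comb hanti (by simp [Ne.symm hai, hi₂]) (by simp [hik, hi₁]), smul_smul,
    ← pow_add, Odd.neg_one_pow ⟨l₁.length + 1, by simp; ring⟩]
  simp

theorem apply_flips_comb_swap_last (hanti : ∀ a b : B, a * b = -(b * a))
    (hneg : ∀ b, f (-b) = -f b) (hf : IsFlip x i f) {a : Fin n} {l : List (Fin n)}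
    (h : (a :: l ++ [i]).Nodup) :
    f (f (comb x (l ++ [i]) a)) = -comb x (l ++ [a]) i := by
  simp only [List.cons_append, List.nodup_cons, List.nodup_append, List.mem_append, List.mem_cons,
    not_or] at h
  obtain ⟨⟨-, hai, -⟩, -, -, h₁⟩ := h
  have hi : i ∉ l := fun hi => h₁ i hi i (.inl rfl) rfl
  rw [hf.apply_comb_append_cons hanti hneg hi (by simp [Ne.symm hai]),
    show comb x [] a * comb x l.reverse i = comb x (a :: l.reverse) i from rfl,
    map_zsmul_of_map_neg hneg (neg_one_pow_eq_or ℤ _),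
    hf.apply_comb (by simp [Ne.symm hai, hi]), smul_smul, ← pow_add,
    Odd.neg_one_pow ⟨l.length + 1, by simp; ring⟩]
  simp

theorem exists_flips_word_swap (hanti : ∀ a b : B, a * b = -(b * a))
    (hneg : ∀ j b, F j (-b) = -F j b) (hF : ∀ j, IsFlip x j (F j)) {i k : Fin n}
    {l r : List (Fin n)} (h : (l ++ i :: k :: r).Nodup) :
    ∃ fs : List (Fin n),
      fs.foldl (fun b j => F j b) (word x (l ++ i :: k :: r)) = -word x (l ++ k :: i :: r) := by
  rcases r.eq_nil_or_concat' with rfl | ⟨r, a, rfl⟩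
  · have hword : ∀ p q, word x (l ++ [p, q]) = comb x (l ++ [p]) q := fun p q => by
      simpa using word_append_singleton x (l ++ [p]) q
    have hnodup : (k :: l ++ [i]).Nodup :=
      (List.perm_append_singleton k (l ++ [i])).nodup_iff.1 (by simpa using h)
    exact ⟨[i, i], by simpa [hword] using apply_flips_comb_swap_last hanti (hneg i) (hF i) hnodup⟩
  · have hword : ∀ p q, word x (l ++ p :: q :: (r ++ [a])) = comb x (l ++ p :: q :: r) a :=
      fun p q => by simpa using word_append_singleton x (l ++ p :: q :: r) a
    have hnodup : (a :: l ++ i :: k :: r).Nodup :=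
      (List.perm_append_singleton a (l ++ i :: k :: r)).nodup_iff.1 (by simpa using h)
    exact ⟨[i, k, i], by simpa [hword] using apply_flips_comb_swap hanti hneg hF hnodup⟩

theorem foldl_flips_zsmul (hneg : ∀ j b, F j (-b) = -F j b) (fs : List (Fin n)) {u : ℤ}
    (hu : u = 1 ∨ u = -1) (b : B) :
    fs.foldl (fun b j => F j b) (u • b) = u • fs.foldl (fun b j => F j b) b := by
  induction fs generalizing b with
  | nil => rfl
  | cons j fs ih => simp only [List.foldl_cons, map_zsmul_of_map_neg (hneg j) hu, ih]

end Flips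

theorem leftNormed_eq_word {B : Type} [NonUnitalNonAssocRing B] {m : ℕ} (x : Fin (m + 1) → B)
    (σ : Perm (Fin (m + 1))) : leftNormed x σ = word x (List.ofFn σ) := by
  rw [List.ofFn_succ', List.concat_eq_append, word_append_singleton, leftNormed, comb,
    List.map_ofFn]
  rfl

theorem exists_flips_leftNormed_mul_swap {B : Type} [NonUnitalNonAssocRing B] {m : ℕ}
    {x : Fin (m + 1) → B} {F : Fin (m + 1) → B → B} (hanti : ∀ a b : B, a * b = -(b * a))
    (hneg : ∀ j b, F j (-b) = -F j b) (hF : ∀ j, IsFlip x j (F j)) (ρ : Perm (Fin (m + 1)))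
    (i : Fin m) :
    ∃ fs : List (Fin (m + 1)), fs.foldl (fun b j => F j b) (leftNormed x ρ) =
      -leftNormed x (ρ * swap i.castSucc i.succ) := by
  have hnodup := List.nodup_ofFn.2 ρ.injective
  rw [List.ofFn_eq_take_append_cons_cons ρ i] at hnodup
  have := exists_flips_word_swap hanti hneg hF hnodup
  rwa [← List.ofFn_eq_take_append_cons_cons, ← List.ofFn_comp_swap_castSucc_succ, ← Perm.coe_mul,
    ← leftNormed_eq_word, ← leftNormed_eq_word] at this

end AntiComm

/-- **Flips generate all signed permutations of the left-normed word.**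
In the free anti-commutative algebra on `x_1,…,x_n` (here: any anti-commutative
algebra `B` with generators `x`), suppose `F_1,…,F_n` are additive maps such that
`F_i` acts as the `x_i`-flip: on every word in normal form
`(ad u_1 ⋯ ad u_k)(x_i)` with the `u_j` words not containing `x_i` (i.e. lying in
the subsemigroup generated by the other generators), it satisfies
`F_i((ad u_1 ⋯ ad u_k)(x_i)) = −(−1)^k (ad u_k ⋯ ad u_1)(x_i)`.
Then the group generated by the flips, acting on the orbit of
`w = {x_1,{x_2,…,{x_{n−1},x_n}…}}`, contains for every permutation `σ ∈ S_n` the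
signed word `sgn(σ)·{x_{σ(1)},{x_{σ(2)},…,{x_{σ(n−1)},x_{σ(n)}}…}}`. -/
theorem flips_generate_signed_permutations (m : ℕ) (B : Type)
    [NonUnitalNonAssocRing B]
    (hanti : ∀ a b : B, a * b = -(b * a))
    (x : Fin (m + 1) → B)
    (F : Fin (m + 1) → B → B)
    (hFneg : ∀ i b, F i (-b) = -(F i b))
    (hF : ∀ (i : Fin (m + 1)) (l : List B),
      (∀ u ∈ l, u ∈ Subsemigroup.closure (x '' {j | j ≠ i})) →
      F i (l.foldr (· * ·) (x i)) =
        ((-1 : ℤ) ^ (l.length + 1)) • (l.reverse.foldr (· * ·) (x i)))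
    (σ : Equiv.Perm (Fin (m + 1))) :
    ∃ l : List (Fin (m + 1)),
      l.foldl (fun b i => F i b) (leftNormed x 1) =
        ((Equiv.Perm.sign σ : ℤ)) • leftNormed x σ := by
  induction σ using Perm.mul_swap_castSucc_succ_induction with
  | one => exact ⟨[], by simp⟩
  | mul_swap ρ i ih =>
    obtain ⟨l, hl⟩ := ih
    obtain ⟨fs, hfs⟩ := AntiComm.exists_flips_leftNormed_mul_swap hanti hFneg hF ρ i
    refine ⟨l ++ fs, ?_⟩
    rw [List.foldl_append, hl,
      AntiComm.foldl_flips_zsmul hFneg fs (Int.isUnit_iff.1 (Perm.sign ρ).isUnit), hfs,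
      Perm.sign_mul, Perm.sign_swap Fin.castSucc_lt_succ.ne]
    simp
end
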